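/- Let A ∈ ℝ^{m×n} and suppose the dual Slater condition holds: there exists y ∈ ℝ^m with Aᵀy < 0 (componentwise). Then the Hoffman constant of the mapping P_A* (computed with the dual norms) satisfies H(P_A*) = max { ‖x‖ : x ∈ ℝ^n, x ≥ 0, ‖Ax‖ ≤ 1 }. -/

import Mathlib

open Matrix Set

noncomputable section

/-- A norm on `Fin n → ℝ`, given as a function with the norm axioms. -/
structure IsNorm {n : ℕ} (ν : (Fin n → ℝ) → ℝ) : Prop where
  nonneg : ∀ x, 0 ≤ ν x
  eq_zero_iff : ∀ x, ν x = 0 ↔ x = 0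
  smul : ∀ (a : ℝ) (x : Fin n → ℝ), ν (a • x) = |a| * ν x
  triangle : ∀ x y, ν (x + y) ≤ ν x + ν y

/-- The dual norm of `ν`, with respect to the standard dot-product pairing. -/
def dualNorm {n : ℕ} (ν : (Fin n → ℝ) → ℝ) (z : Fin n → ℝ) : ℝ :=
  sSup {r | ∃ x, ν x ≤ 1 ∧ r = z ⬝ᵥ x}

/-- Point-to-set distance induced by the norm `ν`. -/
def distWith {n : ℕ} (ν : (Fin n → ℝ) → ℝ) (x : Fin n → ℝ) (S : Set (Fin n → ℝ)) : ℝ :=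
  sInf ((fun s => ν (x - s)) '' S)

/-- The graph of a set-valued mapping. -/
def graphOf {p q : ℕ} (Φ : (Fin p → ℝ) → Set (Fin q → ℝ)) :
    Set ((Fin p → ℝ) × (Fin q → ℝ)) := {z | z.2 ∈ Φ z.1}

/-- The domain of a set-valued mapping. -/
def domOf {p q : ℕ} (Φ : (Fin p → ℝ) → Set (Fin q → ℝ)) : Set (Fin p → ℝ) :=
  {u | (Φ u).Nonempty}

/-- The image of a set-valued mapping. -/
def imOf {p q : ℕ} (Φ : (Fin p → ℝ) → Set (Fin q → ℝ)) : Set (Fin q → ℝ) :=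
  ⋃ u, Φ u

/-- The inverse of a set-valued mapping. -/
def invOf {p q : ℕ} (Φ : (Fin p → ℝ) → Set (Fin q → ℝ)) : (Fin q → ℝ) → Set (Fin p → ℝ) :=
  fun v => {u | v ∈ Φ u}

/-- A polyhedron: an intersection of finitely many closed half-spaces. -/
def IsPolyhedron {E : Type*} [AddCommGroup E] [Module ℝ E] (S : Set E) : Prop :=
  ∃ (k : ℕ) (f : Fin k → E →ₗ[ℝ] ℝ) (c : Fin k → ℝ), S = {x | ∀ i, f i x ≤ c i}

/-- A set-valued mapping is polyhedral if its graph is a polyhedron. -/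
def IsPolyhedralMapping {p q : ℕ} (Φ : (Fin p → ℝ) → Set (Fin q → ℝ)) : Prop :=
  IsPolyhedron (graphOf Φ)

/-- A set-valued mapping is sublinear if its graph is a convex cone containing the origin. -/
def IsSublinearMapping {p q : ℕ} (Φ : (Fin p → ℝ) → Set (Fin q → ℝ)) : Prop :=
  (0 : Fin q → ℝ) ∈ Φ 0 ∧ Convex ℝ (graphOf Φ) ∧
    ∀ (t : ℝ), 0 ≤ t → ∀ z ∈ graphOf Φ, t • z ∈ graphOf Φ

/-- The Hoffman constant of a set-valued mapping, with respect to the norms `νp, νq`. -/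
def hoffmanConst {p q : ℕ} (νp : (Fin p → ℝ) → ℝ) (νq : (Fin q → ℝ) → ℝ)
    (Φ : (Fin p → ℝ) → Set (Fin q → ℝ)) : ℝ :=
  sSup {r | ∃ u v, u ∈ domOf Φ ∧ v ∈ imOf Φ ∧ v ∉ Φ u ∧
    r = distWith νq v (Φ u) / distWith νp u (invOf Φ v)}

/-- The norm of a sublinear set-valued mapping, with respect to the norms `νp, νq`. -/
def svmNorm {p q : ℕ} (νp : (Fin p → ℝ) → ℝ) (νq : (Fin q → ℝ) → ℝ)
    (Φ : (Fin p → ℝ) → Set (Fin q → ℝ)) : ℝ :=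
  sSup {r | ∃ u, u ∈ domOf Φ ∧ νp u ≤ 1 ∧ r = sInf (νq '' Φ u)}

/-- The tangent cone to a set `G` at a point `g ∈ G`. -/
def polyTangentCone {E : Type*} [AddCommGroup E] [Module ℝ E] (G : Set E) (g : E) : Set E :=
  {d | ∃ t : ℝ, 0 < t ∧ g + t • d ∈ G}

/-- The collection of tangent cones to the graph of `Φ`. -/
def tangentCones {p q : ℕ} (Φ : (Fin p → ℝ) → Set (Fin q → ℝ)) :
    Set (Set ((Fin p → ℝ) × (Fin q → ℝ))) :=
  {T | ∃ u v, v ∈ Φ u ∧ T = polyTangentCone (graphOf Φ) (u, v)}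

/-- The set-valued mapping whose graph is `T`. -/
def mapOfGraph {p q : ℕ} (T : Set ((Fin p → ℝ) × (Fin q → ℝ))) :
    (Fin p → ℝ) → Set (Fin q → ℝ) := fun w => {z | (w, z) ∈ T}

/-- A subset is a linear subspace if it is the underlying set of a submodule. -/
def IsLinearSubspace {E : Type*} [AddCommGroup E] [Module ℝ E] (S : Set E) : Prop :=
  ∃ W : Submodule ℝ E, S = ↑W

/-- The upper adjoint of a sublinear mapping. -/
def upperAdjoint {p q : ℕ} (Φ : (Fin p → ℝ) → Set (Fin q → ℝ)) :
    (Fin q → ℝ) → Set (Fin p → ℝ) :=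
  fun w => {z | ∀ u v, v ∈ Φ u → z ⬝ᵥ u ≤ w ⬝ᵥ v}

/-- The solution mapping `b ↦ {x ∈ R : Ax - b ∈ S}`. -/
def solMap {m n : ℕ} (A : Matrix (Fin m) (Fin n) ℝ) (R : Set (Fin n → ℝ))
    (S : Set (Fin m → ℝ)) : (Fin m → ℝ) → Set (Fin n → ℝ) :=
  fun b => {x | x ∈ R ∧ A *ᵥ x - b ∈ S}

/-- The dual cone `{z : ⟨z,x⟩ ≥ 0 for all x ∈ C}`. -/
def dualConeOf {n : ℕ} (C : Set (Fin n → ℝ)) : Set (Fin n → ℝ) :=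
  {z | ∀ x ∈ C, 0 ≤ z ⬝ᵥ x}

/-- A polyhedral cone. -/
def IsPolyhedralCone {n : ℕ} (C : Set (Fin n → ℝ)) : Prop :=
  IsPolyhedron C ∧ (0 : Fin n → ℝ) ∈ C ∧ ∀ (t : ℝ), 0 ≤ t → ∀ x ∈ C, t • x ∈ C

/-- The dual solution mapping `c ↦ {y ∈ S* : c - Aᵀy ∈ R*}`. -/
def dualSolMap {m n : ℕ} (A : Matrix (Fin m) (Fin n) ℝ) (R : Set (Fin n → ℝ))
    (S : Set (Fin m → ℝ)) : (Fin n → ℝ) → Set (Fin m → ℝ) :=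
  fun c => {y | y ∈ dualConeOf S ∧ c - Aᵀ *ᵥ y ∈ dualConeOf R}

/-- The box `{x : ℓ ≤ x ≤ u}`. -/
def boxSet {n : ℕ} (ℓ u : Fin n → ℝ) : Set (Fin n → ℝ) :=
  {x | ∀ i, ℓ i ≤ x i ∧ x i ≤ u i}

/-- The nonnegative orthant of `ℝ^n`. -/
def nonnegOrthant (n : ℕ) : Set (Fin n → ℝ) := {x | ∀ i, 0 ≤ x i}

/-- The Euclidean norm on `Fin n → ℝ`. -/
def euclNorm {n : ℕ} (x : Fin n → ℝ) : ℝ := Real.sqrt (∑ i, x i ^ 2)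

/-- The operator norm induced by the Euclidean norms. -/
def opNorm2 {m n : ℕ} (M : Matrix (Fin m) (Fin n) ℝ) : ℝ :=
  sSup {r | ∃ x, euclNorm x ≤ 1 ∧ r = euclNorm (M *ᵥ x)}

/-- The chi condition measure `χ(A) = sup_{D} ‖(ADAᵀ)⁻¹AD‖₂`. -/
def chiMeasure {m n : ℕ} (A : Matrix (Fin m) (Fin n) ℝ) : ℝ :=
  sSup {r | ∃ d : Fin n → ℝ, (∀ i, 0 < d i) ∧
    r = opNorm2 ((A * Matrix.diagonal d * Aᵀ)⁻¹ * (A * Matrix.diagonal d))}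

/-- The chi-bar condition measure `χ̄(A) = sup_{D} ‖Aᵀ(ADAᵀ)⁻¹AD‖₂`. -/
def chiBarMeasure {m n : ℕ} (A : Matrix (Fin m) (Fin n) ℝ) : ℝ :=
  sSup {r | ∃ d : Fin n → ℝ, (∀ i, 0 < d i) ∧
    r = opNorm2 (Aᵀ * (A * Matrix.diagonal d * Aᵀ)⁻¹ * (A * Matrix.diagonal d))}

/-- The orthogonal complement (w.r.t. the dot product) of a set. -/
def perpOf {m : ℕ} (L : Set (Fin m → ℝ)) : Set (Fin m → ℝ) :=
  {y | ∀ s ∈ L, y ⬝ᵥ s = 0}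

/-- The mapping `P_A : b ↦ {x ≥ 0 : Ax = b}`. -/
def PA {m n : ℕ} (A : Matrix (Fin m) (Fin n) ℝ) : (Fin m → ℝ) → Set (Fin n → ℝ) :=
  fun b => {x | (∀ i, 0 ≤ x i) ∧ A *ᵥ x = b}

/-- The mapping `P_A* : c ↦ {y : Aᵀy ≤ c}`. -/
def PAstar {m n : ℕ} (A : Matrix (Fin m) (Fin n) ℝ) : (Fin n → ℝ) → Set (Fin m → ℝ) :=
  fun c => {y | ∀ i, (Aᵀ *ᵥ y) i ≤ c i}

/-- Signature vectors: entries equal to `1` or `-1`. -/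
def IsSignVector {n : ℕ} (d : Fin n → ℝ) : Prop := ∀ i, d i = 1 ∨ d i = -1

end

/-!
Let `R` be the maximum of `νn` over `{x ≥ 0 | νm (A x) ≤ 1}`, a set which the Slater point makes
compact. Weak duality gives `dist*(y, P_A*(c)) ≥ xᵀ(Aᵀy - c)` for every such `x`; taking a
maximiser `x̄` and a norming functional `g` of `x̄`, the pair `(c, y) = (-g, 0)` has error at
least `R` while `c` is within dual distance `1` of `P_A*⁻¹(0) = ℝⁿ₊`.
Conversely, if `Aᵀy ≤ c'` and `t > R ‖c - c'‖*`, separating `Aᵀy - c` from the closed convex set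
`Aᵀ {‖d‖* ≤ t} - ℝⁿ₊` would give `x ≥ 0` with
`t νm (A x) < xᵀ(Aᵀy - c) ≤ ‖c - c'‖* νn x ≤ R ‖c - c'‖* νm (A x)`, which is absurd;
so `dist*(y, P_A*(c)) ≤ R dist*(c, P_A*⁻¹(y))`.
-/

theorem nonpos_of_forall_pos_mul_le {a b : ℝ} (h : ∀ s, 0 < s → s * a ≤ b) : a ≤ 0 := by
  by_contra! ha
  have := h ((|b| + 1) / a) (by positivity)
  rw [div_mul_cancel₀ _ ha.ne'] at this
  linarith [le_abs_self b]

theorem LinearMap.exists_eq_dotProduct {ι R : Type*} [Fintype ι] [CommSemiring R]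
    (f : (ι → R) →ₗ[R] R) : ∃ p : ι → R, ∀ x, f x = p ⬝ᵥ x := by
  classical
  refine ⟨fun i => f (Pi.single i 1), fun x => ?_⟩
  conv_lhs => rw [pi_eq_sum_univ' x]
  simp [dotProduct, mul_comm]

namespace IsNorm

variable {k : ℕ} {ν : (Fin k → ℝ) → ℝ}

theorem map_zero (hν : IsNorm ν) : ν 0 = 0 := (hν.eq_zero_iff 0).2 rfl

theorem map_neg (hν : IsNorm ν) (x : Fin k → ℝ) : ν (-x) = ν x := by
  simpa using hν.smul (-1) x

theorem convexOn (hν : IsNorm ν) : ConvexOn ℝ univ ν := by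
  refine ⟨convex_univ, fun x _ y _ a b ha hb _ => ?_⟩
  calc ν (a • x + b • y) ≤ ν (a • x) + ν (b • y) := hν.triangle _ _
    _ = a • ν x + b • ν y := by
      rw [hν.smul, hν.smul, abs_of_nonneg ha, abs_of_nonneg hb, smul_eq_mul, smul_eq_mul]

theorem continuous (hν : IsNorm ν) : Continuous ν :=
  hν.convexOn.locallyLipschitz.continuous

theorem exists_pos_mul_norm_le (hν : IsNorm ν) : ∃ c > 0, ∀ x, c * ‖x‖ ≤ ν x := by
  obtain ⟨c, hc, hcν⟩ := (isCompact_sphere (0 : Fin k → ℝ) 1).exists_forall_le'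
    hν.continuous.continuousOn (a := 0) fun x hx =>
      (hν.nonneg x).lt_of_ne fun h => by simp_all [(hν.eq_zero_iff x).1 h.symm]
  refine ⟨c, hc, fun x => ?_⟩
  rcases eq_or_ne x 0 with rfl | hx
  · simp [hν.map_zero]
  have hnx : 0 < ‖x‖ := norm_pos_iff.2 hx
  have := hcν (‖x‖⁻¹ • x) (by simp [norm_smul, hnx.ne'])
  rwa [hν.smul, abs_of_pos (inv_pos.2 hnx), le_inv_mul_iff₀ hnx, mul_comm] at this

theorem isCompact_setOf_le (hν : IsNorm ν) (r : ℝ) : IsCompact {x | ν x ≤ r} := by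
  obtain ⟨c, hc, hcν⟩ := hν.exists_pos_mul_norm_le
  refine (isCompact_closedBall (0 : Fin k → ℝ) (r / c)).of_isClosed_subset
    (isClosed_le hν.continuous continuous_const) fun x hx => ?_
  rw [mem_closedBall_zero_iff, le_div_iff₀ hc, mul_comm]
  exact (hcν x).trans hx

theorem le_dualNorm (hν : IsNorm ν) {z x : Fin k → ℝ} (hx : ν x ≤ 1) : z ⬝ᵥ x ≤ dualNorm ν z := by
  obtain ⟨b, hb⟩ := (hν.isCompact_setOf_le 1).bddAbove_image
    (continuous_const.dotProduct continuous_id :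
      Continuous fun x : Fin k → ℝ => z ⬝ᵥ x).continuousOn
  exact le_csSup ⟨b, by rintro _ ⟨x, hx, rfl⟩; exact hb ⟨x, hx, rfl⟩⟩ ⟨x, hx, rfl⟩

theorem dualNorm_le (hν : IsNorm ν) {z : Fin k → ℝ} {r : ℝ} (h : ∀ x, ν x ≤ 1 → z ⬝ᵥ x ≤ r) :
    dualNorm ν z ≤ r :=
  csSup_le ⟨_, 0, by simp [hν.map_zero], rfl⟩ (by rintro _ ⟨x, hx, rfl⟩; exact h x hx)

theorem dualNorm_nonneg (hν : IsNorm ν) (z : Fin k → ℝ) : 0 ≤ dualNorm ν z := by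
  simpa using hν.le_dualNorm (z := z) (x := 0) (by simp [hν.map_zero])

theorem dualNorm_zero (hν : IsNorm ν) : dualNorm ν 0 = 0 :=
  (hν.dualNorm_le fun x _ => by simp).antisymm (hν.dualNorm_nonneg 0)

theorem dualNorm_neg (hν : IsNorm ν) (z : Fin k → ℝ) : dualNorm ν (-z) = dualNorm ν z := by
  have key : ∀ w : Fin k → ℝ, dualNorm ν (-w) ≤ dualNorm ν w := fun w =>
    hν.dualNorm_le fun x hx => by
      simpa using hν.le_dualNorm (z := w) (x := -x) (by rwa [hν.map_neg])
  exact (key z).antisymm (by simpa using key (-z))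

theorem dotProduct_le_dualNorm_mul (hν : IsNorm ν) (z x : Fin k → ℝ) :
    z ⬝ᵥ x ≤ dualNorm ν z * ν x := by
  rcases eq_or_ne x 0 with rfl | hx
  · simp [hν.map_zero]
  have hpos : 0 < ν x := (hν.nonneg x).lt_of_ne' fun h => hx ((hν.eq_zero_iff x).1 h)
  have := hν.le_dualNorm (z := z) (x := (ν x)⁻¹ • x)
    (by rw [hν.smul, abs_of_pos (inv_pos.2 hpos), inv_mul_cancel₀ hpos.ne'])
  rwa [dotProduct_smul, smul_eq_mul, inv_mul_le_iff₀ hpos, mul_comm] at this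

theorem dualNorm_le_of_forall_le (hν : IsNorm ν) {z : Fin k → ℝ} {r : ℝ} (hr : 0 ≤ r)
    (h : ∀ x, z ⬝ᵥ x ≤ r * ν x) : dualNorm ν z ≤ r :=
  hν.dualNorm_le fun x hx => (h x).trans (mul_le_of_le_one_right hr hx)

theorem exists_dotProduct_le_eq (hν : IsNorm ν) (x₀ : Fin k → ℝ) :
    ∃ g : Fin k → ℝ, (∀ x, g ⬝ᵥ x ≤ ν x) ∧ g ⬝ᵥ x₀ = ν x₀ := by
  rcases eq_or_ne x₀ 0 with rfl | hx₀
  · exact ⟨0, fun x => by simpa using hν.nonneg x, by simp [hν.map_zero]⟩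
  set f := LinearPMap.mkSpanSingleton (K := ℝ) (σ := RingHom.id ℝ) x₀ (ν x₀) hx₀
  have hf : ∀ x : f.domain, f x ≤ ν x := by
    rintro ⟨x, hx⟩
    obtain ⟨c, rfl⟩ := Submodule.mem_span_singleton.1 hx
    rw [LinearPMap.mkSpanSingleton'_apply, smul_eq_mul, hν.smul]
    exact mul_le_mul_of_nonneg_right (le_abs_self c) (hν.nonneg x₀)
  obtain ⟨g, hgf, hgν⟩ := exists_extension_of_le_sublinear f ν
    (fun c hc x => by rw [hν.smul, abs_of_pos hc]) hν.triangle hf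
  obtain ⟨p, hp⟩ := g.exists_eq_dotProduct
  refine ⟨p, fun x => hp x ▸ hgν x, ?_⟩
  rw [← hp, hgf ⟨x₀, Submodule.mem_span_singleton_self x₀⟩]
  exact LinearPMap.mkSpanSingleton'_apply_self _ _ _ _

theorem dualBall_eq_iInter (hν : IsNorm ν) (r : ℝ) :
    {d | dualNorm ν d ≤ r} = ⋂ x ∈ {x | ν x ≤ 1}, {d | d ⬝ᵥ x ≤ r} := by
  ext d
  simp only [mem_iInter]
  exact ⟨fun hd x hx => (hν.le_dualNorm hx).trans hd, hν.dualNorm_le⟩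

theorem convex_dualBall (hν : IsNorm ν) (r : ℝ) : Convex ℝ {d | dualNorm ν d ≤ r} := by
  rw [hν.dualBall_eq_iInter]
  exact convex_iInter₂ fun x _ => convex_halfSpace_le
    ⟨fun _ _ => add_dotProduct _ _ _, fun _ _ => smul_dotProduct _ _ _⟩ r

theorem isCompact_dualBall (hν : IsNorm ν) (r : ℝ) : IsCompact {d | dualNorm ν d ≤ r} := by
  have hclosed : IsClosed {d | dualNorm ν d ≤ r} := by
    rw [hν.dualBall_eq_iInter]
    exact isClosed_biInter fun x _ =>
      isClosed_le (continuous_id.dotProduct continuous_const) continuous_const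
  classical
  refine (isCompact_univ_pi fun i =>
    isCompact_Icc (a := -(r * ν (Pi.single i 1))) (b := r * ν (Pi.single i 1))).of_isClosed_subset
    hclosed fun d hd i _ => ?_
  have hle : ∀ s : ℝ, d i * s ≤ r * ν (Pi.single i s) := fun s => by
    simpa using (hν.dotProduct_le_dualNorm_mul d (Pi.single i s)).trans
      (mul_le_mul_of_nonneg_right hd (hν.nonneg _))
  have h1 := hle 1
  have h2 := hle (-1)
  rw [Pi.single_neg, hν.map_neg] at h2
  constructor <;> linarith

end IsNorm

section Hoffman

variable {p q : ℕ}

theorem distWith_nonneg {ν : (Fin p → ℝ) → ℝ} (hν : ∀ x, 0 ≤ ν x) (x : Fin p → ℝ)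
    (S : Set (Fin p → ℝ)) : 0 ≤ distWith ν x S :=
  Real.sInf_nonneg (by rintro _ ⟨s, -, rfl⟩; exact hν _)

theorem distWith_le {ν : (Fin p → ℝ) → ℝ} (hν : ∀ x, 0 ≤ ν x) {x s : Fin p → ℝ}
    {S : Set (Fin p → ℝ)} (hs : s ∈ S) : distWith ν x S ≤ ν (x - s) :=
  csInf_le ⟨0, by rintro _ ⟨s, -, rfl⟩; exact hν _⟩ ⟨s, hs, rfl⟩

theorem le_distWith {ν : (Fin p → ℝ) → ℝ} {x : Fin p → ℝ} {S : Set (Fin p → ℝ)}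
    (hS : S.Nonempty) {r : ℝ} (h : ∀ s ∈ S, r ≤ ν (x - s)) : r ≤ distWith ν x S :=
  le_csInf (hS.image _) (by rintro _ ⟨s, hs, rfl⟩; exact h s hs)

theorem le_mul_distWith {ν : (Fin p → ℝ) → ℝ} {x : Fin p → ℝ} {S : Set (Fin p → ℝ)}
    (hS : S.Nonempty) {r R : ℝ} (hR : 0 ≤ R) (h : ∀ s ∈ S, r ≤ R * ν (x - s)) :
    r ≤ R * distWith ν x S := by
  rcases hR.eq_or_lt with rfl | hR
  · obtain ⟨s, hs⟩ := hS
    simpa using h s hs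
  · rw [← div_le_iff₀' hR]
    exact le_distWith hS fun s hs => (div_le_iff₀' hR).2 (h s hs)

theorem hoffmanConst_eq {νp : (Fin p → ℝ) → ℝ} {νq : (Fin q → ℝ) → ℝ}
    {Φ : (Fin p → ℝ) → Set (Fin q → ℝ)} {R : ℝ}
    (hνp : ∀ u, 0 ≤ νp u) (hνq : ∀ v, 0 ≤ νq v) (hνq0 : νq 0 = 0) (hR : 0 ≤ R)
    (hbound : ∀ u v u', v ∈ Φ u' → distWith νq v (Φ u) ≤ R * νp (u - u'))
    {u₀ u₀' : Fin p → ℝ} {v₀ : Fin q → ℝ} (hu₀ : (Φ u₀).Nonempty) (hv₀ : v₀ ∈ Φ u₀')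
    (hdist : R ≤ distWith νq v₀ (Φ u₀)) (hnear : νp (u₀ - u₀') ≤ 1) :
    hoffmanConst νp νq Φ = R := by
  have hratio : ∀ u v, v ∈ imOf Φ →
      distWith νq v (Φ u) ≤ R * distWith νp u (invOf Φ v) := fun u v hv => by
    obtain ⟨u', hu'⟩ := mem_iUnion.1 hv
    exact le_mul_distWith ⟨u', hu'⟩ hR fun u'' hu'' => hbound u v u'' hu''
  have hupper : R ∈ upperBounds {r | ∃ u v, u ∈ domOf Φ ∧ v ∈ imOf Φ ∧ v ∉ Φ u ∧
      r = distWith νq v (Φ u) / distWith νp u (invOf Φ v)} := by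
    rintro _ ⟨u, v, -, hv, -, rfl⟩
    exact div_le_of_le_mul₀ (distWith_nonneg hνp _ _) hR (hratio u v hv)
  refine le_antisymm (Real.sSup_le hupper hR) ?_
  rcases hR.eq_or_lt with rfl | hRpos
  · exact Real.sSup_nonneg (by
      rintro _ ⟨u, v, -, -, -, rfl⟩
      exact div_nonneg (distWith_nonneg hνq _ _) (distWith_nonneg hνp _ _))
  have hv₀im : v₀ ∈ imOf Φ := mem_iUnion.2 ⟨u₀', hv₀⟩
  have hv₀u₀ : v₀ ∉ Φ u₀ := fun h => by
    have := distWith_le hνq (x := v₀) h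
    rw [sub_self, hνq0] at this
    linarith
  have hND := hratio u₀ v₀ hv₀im
  have hDpos : 0 < distWith νp u₀ (invOf Φ v₀) :=
    pos_of_mul_pos_right (hRpos.trans_le (hdist.trans hND)) hR
  calc R ≤ distWith νq v₀ (Φ u₀) := hdist
    _ ≤ distWith νq v₀ (Φ u₀) / distWith νp u₀ (invOf Φ v₀) :=
      le_div_self (hR.trans hdist) hDpos ((distWith_le hνp hv₀).trans hnear)
    _ ≤ hoffmanConst νp νq Φ := le_csSup ⟨R, hupper⟩ ⟨u₀, v₀, hu₀, hv₀im, hv₀u₀, rfl⟩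

end Hoffman

section PAstar

open Pointwise

variable {m n : ℕ} {A : Matrix (Fin m) (Fin n) ℝ} {νn : (Fin n → ℝ) → ℝ} {νm : (Fin m → ℝ) → ℝ}

theorem PAstar_nonempty {y₀ : Fin m → ℝ} (hy₀ : ∀ i, (Aᵀ *ᵥ y₀) i < 0) (c : Fin n → ℝ) :
    (PAstar A c).Nonempty := by
  set a := Aᵀ *ᵥ y₀
  refine ⟨(∑ j, |c j| / -a j) • y₀, fun i => ?_⟩
  have hi : |c i| / -a i ≤ ∑ j, |c j| / -a j := Finset.single_le_sum
    (fun j _ => div_nonneg (abs_nonneg _) (neg_nonneg.2 (hy₀ j).le)) (Finset.mem_univ i)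
  rw [mulVec_smul, Pi.smul_apply, smul_eq_mul]
  calc (∑ j, |c j| / -a j) * a i ≤ |c i| / -a i * a i := mul_le_mul_of_nonpos_right hi (hy₀ i).le
    _ = -|c i| := by field_simp [(hy₀ i).ne]
    _ ≤ c i := neg_abs_le _

theorem isCompact_setOf_nonneg_and_mulVec_le_one (hνm : IsNorm νm) {y₀ : Fin m → ℝ}
    (hy₀ : ∀ i, (Aᵀ *ᵥ y₀) i < 0) : IsCompact {x : Fin n → ℝ | 0 ≤ x ∧ νm (A *ᵥ x) ≤ 1} := by
  set s := -(Aᵀ *ᵥ y₀)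
  have hs : ∀ i, 0 < s i := fun i => neg_pos.2 (hy₀ i)
  set D := dualNorm νm (-y₀)
  refine (isCompact_univ_pi fun i => isCompact_Icc (a := 0) (b := D / s i)).of_isClosed_subset
    (isClosed_Ici.inter (isClosed_le
      (hνm.continuous.comp (continuous_const.matrix_mulVec continuous_id)) continuous_const)) ?_
  rintro x ⟨hx, hAx⟩ i -
  have hsx : s ⬝ᵥ x ≤ D := calc
    s ⬝ᵥ x = -y₀ ⬝ᵥ A *ᵥ x := by
      rw [dotProduct_comm, dotProduct_neg, neg_dotProduct, dotProduct_transpose_mulVec]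
    _ ≤ D * νm (A *ᵥ x) := hνm.dotProduct_le_dualNorm_mul _ _
    _ ≤ D := mul_le_of_le_one_right (hνm.dualNorm_nonneg _) hAx
  refine ⟨hx i, (le_div_iff₀' (hs i)).2 ((Finset.single_le_sum (f := fun j => s j * x j)
    (fun j _ => mul_nonneg (hs j).le (hx j)) (Finset.mem_univ i)).trans hsx)⟩

theorem le_mul_mulVec_of_forall_le_one (hνn : IsNorm νn) (hνm : IsNorm νm) {R : ℝ}
    (hR : ∀ x, 0 ≤ x → νm (A *ᵥ x) ≤ 1 → νn x ≤ R) {x : Fin n → ℝ} (hx : 0 ≤ x) :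
    νn x ≤ R * νm (A *ᵥ x) := by
  rcases (hνm.nonneg (A *ᵥ x)).eq_or_lt with h0 | hpos
  · rw [← h0, mul_zero]
    refine nonpos_of_forall_pos_mul_le (b := R) fun s hs => ?_
    have := hR (s • x) (smul_nonneg hs.le hx) (by rw [mulVec_smul, hνm.smul, ← h0]; simp)
    rwa [hνn.smul, abs_of_pos hs] at this
  · have := hR ((νm (A *ᵥ x))⁻¹ • x) (smul_nonneg (inv_nonneg.2 hpos.le) hx)
      (by rw [mulVec_smul, hνm.smul, abs_of_pos (inv_pos.2 hpos), inv_mul_cancel₀ hpos.ne'])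
    rwa [hνn.smul, abs_of_pos (inv_pos.2 hpos), inv_mul_le_iff₀ hpos, mul_comm] at this

theorem dotProduct_le_distWith_PAstar (hνm : IsNorm νm) {x : Fin n → ℝ} (hx : 0 ≤ x)
    (hAx : νm (A *ᵥ x) ≤ 1) {c : Fin n → ℝ} (hc : (PAstar A c).Nonempty) (y : Fin m → ℝ) :
    x ⬝ᵥ (Aᵀ *ᵥ y - c) ≤ distWith (dualNorm νm) y (PAstar A c) :=
  le_distWith hc fun y' hy' => calc
    x ⬝ᵥ (Aᵀ *ᵥ y - c) ≤ x ⬝ᵥ (Aᵀ *ᵥ (y - y')) := by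
      rw [mulVec_sub]
      exact dotProduct_le_dotProduct_of_nonneg_left (sub_le_sub_left hy' _) hx
    _ = (y - y') ⬝ᵥ A *ᵥ x := dotProduct_transpose_mulVec _ _ _
    _ ≤ dualNorm νm (y - y') * νm (A *ᵥ x) := hνm.dotProduct_le_dualNorm_mul _ _
    _ ≤ dualNorm νm (y - y') := mul_le_of_le_one_right (hνm.dualNorm_nonneg _) hAx

theorem exists_nonneg_mul_lt_dotProduct_of_notMem (hνm : IsNorm νm) {t : ℝ} (ht : 0 ≤ t)
    {b : Fin n → ℝ} (hb : b ∉ Aᵀ.mulVecLin '' {d | dualNorm νm d ≤ t} + Iic 0) :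
    ∃ x, 0 ≤ x ∧ t * νm (A *ᵥ x) < x ⬝ᵥ b := by
  obtain ⟨f, α, hfK, hfb⟩ := geometric_hahn_banach_closed_point
    (((hνm.convex_dualBall t).linear_image _).add (convex_Iic 0))
    (isClosed_Iic.add_left_of_isCompact
      ((hνm.isCompact_dualBall t).image Aᵀ.mulVecLin.continuous_of_finiteDimensional)) hb
  obtain ⟨x, hfx⟩ := f.toLinearMap.exists_eq_dotProduct
  have hmem : ∀ d s, dualNorm νm d ≤ t → s ≤ 0 → x ⬝ᵥ (Aᵀ *ᵥ d + s) < α := fun d s hd hs =>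
    hfx (Aᵀ *ᵥ d + s) ▸ hfK _ ⟨_, ⟨d, hd, rfl⟩, s, hs, rfl⟩
  have hx : 0 ≤ x := fun i => neg_nonpos.1 <| nonpos_of_forall_pos_mul_le (b := α) fun r hr => by
    have := hmem 0 (-(r • Pi.single i 1)) (by rw [hνm.dualNorm_zero]; exact ht)
      (neg_nonpos.2 (smul_nonneg hr.le (Pi.single_nonneg.2 zero_le_one)))
    simp only [mulVec_zero, zero_add, dotProduct_neg, dotProduct_smul, dotProduct_single,
      smul_eq_mul, mul_one] at this
    linarith
  obtain ⟨g, hg, hgAx⟩ := hνm.exists_dotProduct_le_eq (A *ᵥ x)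
  have hα : t * νm (A *ᵥ x) < α := by
    have := hmem (t • g) 0 (hνm.dualNorm_le_of_forall_le ht fun z => by
      rw [smul_dotProduct, smul_eq_mul]; exact mul_le_mul_of_nonneg_left (hg z) ht) le_rfl
    rwa [add_zero, dotProduct_transpose_mulVec, smul_dotProduct, hgAx, smul_eq_mul] at this
  exact ⟨x, hx, hα.trans (hfx b ▸ hfb)⟩

theorem exists_mem_PAstar_dualNorm_sub_le (hνn : IsNorm νn) (hνm : IsNorm νm) {R : ℝ}
    (hR0 : 0 ≤ R) (hR : ∀ x, 0 ≤ x → νn x ≤ R * νm (A *ᵥ x)) {c c' : Fin n → ℝ}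
    {y : Fin m → ℝ} (hy : y ∈ PAstar A c') {t : ℝ} (ht : R * dualNorm νn (c - c') < t) :
    ∃ y' ∈ PAstar A c, dualNorm νm (y - y') ≤ t := by
  by_cases hb : Aᵀ *ᵥ y - c ∈ Aᵀ.mulVecLin '' {d | dualNorm νm d ≤ t} + Iic 0
  · obtain ⟨_, ⟨d, hd, rfl⟩, s, hs, hsum⟩ := hb
    refine ⟨y - d, fun i => ?_, by rwa [sub_sub_cancel]⟩
    have := congrFun hsum i
    simp only [Pi.add_apply, Matrix.mulVecLin_apply, Pi.sub_apply] at this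
    simp only [mulVec_sub, Pi.sub_apply]
    linarith [show s i ≤ 0 from hs i]
  obtain ⟨x, hx, hlt⟩ := exists_nonneg_mul_lt_dotProduct_of_notMem (A := A) hνm
    ((mul_nonneg hR0 (hνn.dualNorm_nonneg _)).trans ht.le) hb
  have : x ⬝ᵥ (Aᵀ *ᵥ y - c) ≤ t * νm (A *ᵥ x) := calc
    x ⬝ᵥ (Aᵀ *ᵥ y - c) ≤ x ⬝ᵥ (c' - c) :=
      dotProduct_le_dotProduct_of_nonneg_left (sub_le_sub_right hy c) hx
    _ ≤ dualNorm νn (c' - c) * νn x := by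
      rw [dotProduct_comm]; exact hνn.dotProduct_le_dualNorm_mul _ _
    _ ≤ dualNorm νn (c - c') * (R * νm (A *ᵥ x)) := by
      rw [← neg_sub, hνn.dualNorm_neg]
      exact mul_le_mul_of_nonneg_left (hR x hx) (hνn.dualNorm_nonneg _)
    _ ≤ t * νm (A *ᵥ x) := by
      rw [← mul_assoc, mul_comm _ R]
      exact mul_le_mul_of_nonneg_right ht.le (hνm.nonneg _)
  exact absurd hlt this.not_gt

theorem distWith_PAstar_le (hνn : IsNorm νn) (hνm : IsNorm νm) {R : ℝ} (hR0 : 0 ≤ R)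
    (hR : ∀ x, 0 ≤ x → νn x ≤ R * νm (A *ᵥ x)) {c c' : Fin n → ℝ} {y : Fin m → ℝ}
    (hy : y ∈ PAstar A c') :
    distWith (dualNorm νm) y (PAstar A c) ≤ R * dualNorm νn (c - c') :=
  le_of_forall_pos_le_add fun ε hε => by
    obtain ⟨y', hy', hyy'⟩ :=
      exists_mem_PAstar_dualNorm_sub_le hνn hνm hR0 hR hy (lt_add_of_pos_right _ hε)
    exact (distWith_le hνm.dualNorm_nonneg hy').trans hyy'

end PAstar

/-- under the dual Slater condition `Aᵀy < 0`,
`H(P_A*) = max { ‖x‖ : x ≥ 0, ‖Ax‖ ≤ 1 }` (Hoffman constant in the dual norms). -/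
theorem stmt14 {m n : ℕ} (A : Matrix (Fin m) (Fin n) ℝ)
    (νn : (Fin n → ℝ) → ℝ) (νm : (Fin m → ℝ) → ℝ) (hνn : IsNorm νn) (hνm : IsNorm νm)
    (hSlater : ∃ y : Fin m → ℝ, ∀ i, (Aᵀ *ᵥ y) i < 0) :
    hoffmanConst (dualNorm νn) (dualNorm νm) (PAstar A) =
      sSup {r | ∃ x : Fin n → ℝ, (∀ i, 0 ≤ x i) ∧ νm (A *ᵥ x) ≤ 1 ∧ r = νn x} := by
  obtain ⟨y₀, hy₀⟩ := hSlater
  obtain ⟨xb, ⟨hxb, hAxb⟩, hmax⟩ :=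
    (isCompact_setOf_nonneg_and_mulVec_le_one hνm hy₀).exists_isMaxOn
      ⟨0, le_rfl, by simp [hνm.map_zero]⟩ hνn.continuous.continuousOn
  have hR : ∀ x, 0 ≤ x → νm (A *ᵥ x) ≤ 1 → νn x ≤ νn xb := fun x hx hAx => hmax ⟨hx, hAx⟩
  have hmaxval : IsGreatest {r | ∃ x : Fin n → ℝ, (∀ i, 0 ≤ x i) ∧ νm (A *ᵥ x) ≤ 1 ∧ r = νn x}
      (νn xb) := ⟨⟨xb, hxb, hAxb, rfl⟩, by rintro _ ⟨x, hx, hAx, rfl⟩; exact hR x hx hAx⟩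
  rw [hmaxval.csSup_eq]
  obtain ⟨g, hg, hgxb⟩ := hνn.exists_dotProduct_le_eq xb
  have hdom := PAstar_nonempty hy₀ (-g)
  refine hoffmanConst_eq hνn.dualNorm_nonneg hνm.dualNorm_nonneg hνm.dualNorm_zero (hνn.nonneg xb)
    (fun c y c' hy => distWith_PAstar_le hνn hνm (hνn.nonneg xb)
      (fun x hx => le_mul_mulVec_of_forall_le_one hνn hνm hR hx) hy)
    hdom (u₀' := 0) (v₀ := 0) (fun i => by simp) ?_ ?_
  · simpa [dotProduct_comm xb g, hgxb] using dotProduct_le_distWith_PAstar hνm hxb hAxb hdom 0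
  · simpa [hνn.dualNorm_neg] using
      hνn.dualNorm_le_of_forall_le zero_le_one fun x => by simpa using hg x
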